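/- Let ν be a positive Borel measure on ℂ^n such that the function z ↦ (πt)^{-n} ∫ exp(−|z−w|²/t) dν(w) is bounded on ℂ^n. Then there exists C > 0 such that ν(B(z,1)) ≤ C for all z ∈ ℂ^n. -/

import Mathlib

open MeasureTheory Complex Filter Metric
open scoped ENNReal

noncomputable section

/-- `ℂⁿ`. -/
abbrev Cn (n : ℕ) := Fin n → ℂ

/-- Squared Euclidean norm `|z|²` on `ℂⁿ`. -/
def hnorm2 {n : ℕ} (z : Cn n) : ℝ := ∑ i, Complex.normSq (z i)

/-- Hermitian inner product `z ⬝ conj w` on `ℂⁿ`. -/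
def hinner {n : ℕ} (z w : Cn n) : ℂ := ∑ i, z i * (starRingEnd ℂ) (w i)

/-- The Euclidean open ball of radius `R` about `z` in `ℂⁿ`. -/
def cEball {n : ℕ} (z : Cn n) (R : ℝ) : Set (Cn n) := {w | Real.sqrt (hnorm2 (w - z)) < R}

/-- The Gaussian probability measure `dμ_t(z) = (πt)^{-n} exp(-|z|²/t) dz`. -/
def gaussianMeasure (n : ℕ) (t : ℝ) : Measure (Cn n) :=
  MeasureTheory.volume.withDensity fun z =>
    ENNReal.ofReal (((Real.pi * t) ^ n)⁻¹ * Real.exp (-(hnorm2 z) / t))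

/-- The reproducing kernel `K_z^t(w) = exp(w ⬝ conj z / t)`. -/
def FockKer (n : ℕ) (t : ℝ) (z : Cn n) : Cn n → ℂ :=
  fun w => Complex.exp (hinner w z / t)

/-- The normalized reproducing kernel `k_z^t(w) = exp(w ⬝ conj z / t - |z|²/(2t))`. -/
def normKer (n : ℕ) (t : ℝ) (z : Cn n) : Cn n → ℂ :=
  fun w => Complex.exp (hinner w z / t - hnorm2 z / (2 * t))

/-- Membership in the Fock space `F_t²`: entire and square-integrable w.r.t. `μ_t`. -/
def InFock (n : ℕ) (t : ℝ) (f : Cn n → ℂ) : Prop :=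
  AnalyticOnNhd ℂ f Set.univ ∧ MemLp f 2 (gaussianMeasure n t)

/-- The Weyl operator `(W_z^t g)(w) = k_z^t(w) g(w - z)` acting on functions. -/
def Weyl (n : ℕ) (t : ℝ) (z : Cn n) (g : Cn n → ℂ) : Cn n → ℂ :=
  fun w => normKer n t z w * g (w - z)

/-- The symbol `h_z^t(w) = exp(2 i Im(w ⬝ conj z)/t)`. -/
def hFun (n : ℕ) (t : ℝ) (z : Cn n) : Cn n → ℂ :=
  fun w => Complex.exp (2 * Complex.I * ((hinner w z).im : ℂ) / t)

/-- The Fock space `F_t²` as a subspace of `L²(ℂⁿ, μ_t)`: elements having an entire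
representative. -/
def FockLp (n : ℕ) (t : ℝ) : Submodule ℂ (Lp ℂ 2 (gaussianMeasure n t)) where
  carrier := {f | ∃ g : Cn n → ℂ, AnalyticOnNhd ℂ g Set.univ ∧
    (f : Cn n → ℂ) =ᵐ[gaussianMeasure n t] g}
  zero_mem' := ⟨0, analyticOnNhd_const, Lp.coeFn_zero _ _ _⟩
  add_mem' := by
    rintro f f' ⟨g, hg, hfg⟩ ⟨g', hg', hfg'⟩
    exact ⟨g + g', hg.add hg', (Lp.coeFn_add f f').trans (hfg.add hfg')⟩
  smul_mem' := by
    rintro c f ⟨g, hg, hfg⟩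
    refine ⟨c • g, ?_, (Lp.coeFn_smul c f).trans (hfg.const_smul c)⟩
    simpa [Pi.smul_def, smul_eq_mul] using analyticOnNhd_const.mul hg

/-- The Fock space as a Hilbert-space type. -/
abbrev FockH (n : ℕ) (t : ℝ) := ↥(FockLp n t)

/-- `P` is the orthogonal projection of `L²(μ_t)` onto the Fock space. -/
def IsFockProjection (n : ℕ) (t : ℝ)
    (P : Lp ℂ 2 (gaussianMeasure n t) →L[ℂ] Lp ℂ 2 (gaussianMeasure n t)) : Prop :=
  (∀ u, P u ∈ FockLp n t) ∧ (∀ u ∈ FockLp n t, P u = u) ∧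
    (∀ u, ∀ v ∈ FockLp n t, (inner ℂ (u - P u) v : ℂ) = 0)

/-- A Fredholm operator: finite-dimensional kernel, closed range, finite-dimensional cokernel. -/
def IsFredholm {H : Type*} [NormedAddCommGroup H] [NormedSpace ℂ H]
    (T : H →L[ℂ] H) : Prop :=
  FiniteDimensional ℂ (LinearMap.ker (T : H →ₗ[ℂ] H)) ∧ IsClosed (LinearMap.range (T : H →ₗ[ℂ] H) : Set H) ∧
    FiniteDimensional ℂ (H ⧸ LinearMap.range (T : H →ₗ[ℂ] H))

/-- The essential spectrum `σ_ess(A) = {λ : A - λ is not Fredholm}`. -/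
def essSpectrum {H : Type*} [NormedAddCommGroup H] [NormedSpace ℂ H]
    (A : H →L[ℂ] H) : Set ℂ :=
  {lam | ¬ IsFredholm (A - lam • (1 : H →L[ℂ] H))}

/-- The essential norm: the distance to the compact operators. -/
def essNorm {H : Type*} [NormedAddCommGroup H] [NormedSpace ℂ H]
    (T : H →L[ℂ] H) : ℝ :=
  sInf {c : ℝ | ∃ K : H →L[ℂ] H, IsCompactOperator K ∧ c = ‖T - K‖}

/-!
On the ball `B(z, R)` the heat kernel centred at `z` is at least `(πt)^{-n} e^{-R²/t}`, so
Markov's inequality bounds `ν(B(z, R))` by the heat transform of `ν` at `z` divided by this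
constant.
-/

lemma hnorm2_sub_comm {n : ℕ} (z w : Cn n) : hnorm2 (z - w) = hnorm2 (w - z) := by
  simp only [hnorm2, ← neg_sub w z, Pi.neg_apply, Complex.normSq_neg]

@[fun_prop]
lemma continuous_hnorm2 {n : ℕ} : Continuous (hnorm2 : Cn n → ℝ) :=
  continuous_finsetSum _ fun i _ => Complex.continuous_normSq.comp (continuous_apply i)

lemma hnorm2_sub_lt_sq_of_mem_cEball {n : ℕ} {z w : Cn n} {R : ℝ} (hw : w ∈ cEball z R) :
    hnorm2 (z - w) < R ^ 2 :=
  hnorm2_sub_comm z w ▸ Real.lt_sq_of_sqrt_lt hw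

def heatKernel (n : ℕ) (t : ℝ) (z w : Cn n) : ℝ :=
  ((Real.pi * t) ^ n)⁻¹ * Real.exp (-(hnorm2 (z - w)) / t)

lemma continuous_heatKernel (n : ℕ) (t : ℝ) (z : Cn n) : Continuous (heatKernel n t z) := by
  unfold heatKernel
  fun_prop

lemma heatKernel_ge_of_mem_cEball {n : ℕ} {t R : ℝ} (ht : 0 ≤ t) {z w : Cn n}
    (hw : w ∈ cEball z R) :
    ((Real.pi * t) ^ n)⁻¹ * Real.exp (-R ^ 2 / t) ≤ heatKernel n t z w := by
  have hR := hnorm2_sub_lt_sq_of_mem_cEball hw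
  unfold heatKernel
  gcongr

lemma measure_cEball_le_heatTransform_div {n : ℕ} {t : ℝ} (ht : 0 < t) (nu : Measure (Cn n))
    (z : Cn n) (R : ℝ) :
    nu (cEball z R) ≤ (∫⁻ w, ENNReal.ofReal (heatKernel n t z w) ∂nu) /
      ENNReal.ofReal (((Real.pi * t) ^ n)⁻¹ * Real.exp (-R ^ 2 / t)) := by
  have hc : 0 < ((Real.pi * t) ^ n)⁻¹ * Real.exp (-R ^ 2 / t) := by positivity
  refine (measure_mono fun w hw => ?_).trans <| meas_ge_le_lintegral_div
    (continuous_heatKernel n t z).measurable.ennreal_ofReal.aemeasurable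
    (ENNReal.ofReal_pos.2 hc).ne' ENNReal.ofReal_ne_top
  exact ENNReal.ofReal_le_ofReal (heatKernel_ge_of_mem_cEball ht.le hw)

theorem carleson_of_bounded_heat_transform_general (n : ℕ) (t : ℝ) (ht : 0 < t)
    (nu : Measure (Cn n)) (B : ℝ)
    (h : ∀ z : Cn n,
      ∫⁻ w, ENNReal.ofReal (((Real.pi * t) ^ n)⁻¹ * Real.exp (-(hnorm2 (z - w)) / t)) ∂nu
        ≤ ENNReal.ofReal B) :
    ∃ C : ℝ, 0 < C ∧ ∀ z : Cn n, nu (cEball z 1) ≤ ENNReal.ofReal C := by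
  set c := ((Real.pi * t) ^ n)⁻¹ * Real.exp (-1 ^ 2 / t)
  have hc : 0 < c := by positivity
  refine ⟨max (B / c) 1, by positivity, fun z => ?_⟩
  calc nu (cEball z 1)
      ≤ (∫⁻ w, ENNReal.ofReal (heatKernel n t z w) ∂nu) / ENNReal.ofReal c :=
        measure_cEball_le_heatTransform_div ht nu z 1
    _ ≤ ENNReal.ofReal B / ENNReal.ofReal c := by gcongr; exact h z
    _ = ENNReal.ofReal (B / c) := (ENNReal.ofReal_div_of_pos hc).symm
    _ ≤ ENNReal.ofReal (max (B / c) 1) := ENNReal.ofReal_le_ofReal (le_max_left _ _)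

/-- if the Gaussian heat transform `z ↦ (πt)^{-n} ∫ exp(-|z-w|²/t) dν(w)` of a
positive Borel measure `ν` is bounded, then `ν` is uniformly bounded on unit balls. -/
theorem carleson_of_bounded_heat_transform (n : ℕ) (hn : 1 ≤ n) (t : ℝ) (ht : 0 < t)
    (nu : Measure (Cn n)) (B : ℝ)
    (h : ∀ z : Cn n,
      ∫⁻ w, ENNReal.ofReal (((Real.pi * t) ^ n)⁻¹ * Real.exp (-(hnorm2 (z - w)) / t)) ∂nu
        ≤ ENNReal.ofReal B) :
    ∃ C : ℝ, 0 < C ∧ ∀ z : Cn n, nu (cEball z 1) ≤ ENNReal.ofReal C :=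
  carleson_of_bounded_heat_transform_general n t ht nu B h

end
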